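/- arXiv:1310.7288 — 3 statements merged into one kernel-verified Lean document; each statement's English description precedes it below -/
import Mathlib

section
/- Define p_m(n) as the expected number of distinct subsequences of length n−m of a uniformly random binary string of length n. For each fixed m ≥ 0, there is a polynomial q_m of degree m with leading coefficient 1/(2^m · m!) such that p_m(n) = q_m(n) for all n ≥ m; consequently Ĉ(n, n−m) = 2^{-m}·C(n,m) + O(n^{m-1}). -/
/-
Splitting off the first letter, the `(k+1)`-subsequences of `a :: t` are those of `t` together
with `a` prepended to the `k`-subsequences of `t`, and the overlap consists of the
`(k+1)`-subsequences of `t` that begin with `a`. Summing over `a` gives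
`Ĉ(n+1, k+1) = Ĉ(n, k) + Ĉ(n, k+1) / 2`, that is `p_{m+1}(n+1) - p_{m+1}(n) = p_m(n) / 2`.
So, by induction on `m`, `p_{m+1}` is an antidifference of `p_m / 2`; antidifferences of
polynomials exist (Bernoulli polynomials) and raise the degree by one, dividing the leading
coefficient by the new degree. Finally `2^{-m} C(n, m)` is a polynomial in `n` with the same degree
and leading coefficient as `p_m`, so the difference has degree `< m`.
-/

/-- Number of distinct subsequences of `s` of length `m`. -/
def countM (s : List Bool) (m : ℕ) : ℕ :=
  ((s.sublists.filter (fun t => t.length == m)).dedup).length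

/-- Expected number of distinct `k`-subsequences of a uniformly random
binary string of length `n`. -/
noncomputable def Chat (n k : ℕ) : ℚ :=
  (∑ f : Fin n → Bool, (countM (List.ofFn f) k : ℚ)) / 2 ^ n

open Polynomial

section Subsequences

variable {α : Type*} [DecidableEq α]

def sublistsLenFinset (s : List α) (k : ℕ) : Finset (List α) := (s.sublistsLen k).toFinset

@[simp]
lemma mem_sublistsLenFinset {s u : List α} {k : ℕ} :
    u ∈ sublistsLenFinset s k ↔ u.Sublist s ∧ u.length = k := by
  simp [sublistsLenFinset, List.mem_sublistsLen]

lemma sublistsLenFinset_cons_succ (a : α) (t : List α) (k : ℕ) :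
    sublistsLenFinset (a :: t) (k + 1)
      = sublistsLenFinset t (k + 1) ∪ (sublistsLenFinset t k).image (a :: ·) := by
  ext u
  simp [sublistsLenFinset, List.sublistsLen_succ_cons]

lemma sublistsLenFinset_inter_image_cons (a : α) (t : List α) (k : ℕ) :
    sublistsLenFinset t (k + 1) ∩ (sublistsLenFinset t k).image (a :: ·)
      = (sublistsLenFinset t (k + 1)).filter (·.head? = some a) := by
  ext u
  simp only [Finset.mem_inter, Finset.mem_image, Finset.mem_filter, mem_sublistsLenFinset]
  constructor
  · rintro ⟨h, r, -, rfl⟩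
    exact ⟨h, rfl⟩
  · rintro ⟨⟨hs, hl⟩, hh⟩
    obtain ⟨r, rfl⟩ : ∃ r, u = a :: r := by cases u <;> simp_all
    exact ⟨⟨hs, hl⟩, r, ⟨(List.sublist_cons_self a r).trans hs, by simpa using hl⟩, rfl⟩

lemma card_sublistsLenFinset_cons_succ (a : α) (t : List α) (k : ℕ) :
    (sublistsLenFinset (a :: t) (k + 1)).card
        + ((sublistsLenFinset t (k + 1)).filter (·.head? = some a)).card
      = (sublistsLenFinset t (k + 1)).card + (sublistsLenFinset t k).card := by
  rw [sublistsLenFinset_cons_succ, ← sublistsLenFinset_inter_image_cons,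
    Finset.card_union_add_card_inter, Finset.card_image_of_injective _ List.cons_injective]

end Subsequences

lemma card_filter_head_true_add_false (t : List Bool) (k : ℕ) :
    ((sublistsLenFinset t (k + 1)).filter (·.head? = some true)).card
      + ((sublistsLenFinset t (k + 1)).filter (·.head? = some false)).card
      = (sublistsLenFinset t (k + 1)).card := by
  rw [← Finset.card_filter_add_card_filter_not (s := sublistsLenFinset t (k + 1))
    (p := (·.head? = some true))]
  congr 2
  refine Finset.filter_congr fun u hu => ?_
  obtain ⟨b, r, rfl⟩ : ∃ b r, u = b :: r :=
    List.exists_cons_of_length_eq_add_one (mem_sublistsLenFinset.mp hu).2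
  cases b <;> simp

lemma countM_eq_card_sublistsLenFinset (s : List Bool) (k : ℕ) :
    countM s k = (sublistsLenFinset s k).card := by
  rw [countM, ← List.card_toFinset]
  congr 1
  ext u
  simp

lemma countM_cons_true_add_cons_false (t : List Bool) (k : ℕ) :
    countM (true :: t) (k + 1) + countM (false :: t) (k + 1)
      = countM t (k + 1) + 2 * countM t k := by
  have htrue := card_sublistsLenFinset_cons_succ true t k
  have hfalse := card_sublistsLenFinset_cons_succ false t k
  have hsplit := card_filter_head_true_add_false t k
  simp only [countM_eq_card_sublistsLenFinset]
  omega

lemma countM_self (s : List Bool) : countM s s.length = 1 := by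
  rw [countM_eq_card_sublistsLenFinset, Finset.card_eq_one]
  refine ⟨s, Finset.ext fun u => ?_⟩
  simp only [mem_sublistsLenFinset, Finset.mem_singleton]
  exact ⟨fun h => h.1.eq_of_length h.2, by rintro rfl; simp⟩

lemma Chat_self (n : ℕ) : Chat n n = 1 := by
  have h (f : Fin n → Bool) : countM (List.ofFn f) n = 1 := by
    simpa using countM_self (List.ofFn f)
  simp [Chat, h]

lemma Chat_succ_succ (n k : ℕ) : Chat (n + 1) (k + 1) = Chat n k + Chat n (k + 1) / 2 := by
  have hsum : ∑ f : Fin (n + 1) → Bool, (countM (List.ofFn f) (k + 1) : ℚ)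
      = ∑ g : Fin n → Bool,
          ((countM (List.ofFn g) (k + 1) : ℚ) + 2 * countM (List.ofFn g) k) := by
    rw [← Fintype.sum_equiv (Fin.consEquiv fun _ => Bool) _ _ fun _ => rfl,
      Fintype.sum_prod_type, Fintype.sum_bool, ← Finset.sum_add_distrib]
    refine Finset.sum_congr rfl fun g _ => ?_
    simp only [Fin.consEquiv_apply, List.ofFn_succ, Fin.cons_zero, Fin.cons_succ]
    exact_mod_cast countM_cons_true_add_cons_false (List.ofFn g) k
  rw [Chat, Chat, Chat, hsum, Finset.sum_add_distrib, ← Finset.mul_sum, pow_succ]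
  field_simp
  ring

lemma exists_eval_add_one_sub_eval (r : ℚ[X]) (hr : r ≠ 0) :
    ∃ Q : ℚ[X], (∀ x, Q.eval (x + 1) - Q.eval x = r.eval x) ∧
      Q.natDegree = r.natDegree + 1 ∧ Q.leadingCoeff = r.leadingCoeff / (r.natDegree + 1) := by
  set d := r.natDegree
  -- Faulhaber: `Bₖ₊₁(x + 1) - Bₖ₊₁(x) = (k + 1) xᵏ`.
  set Q := ∑ i ∈ Finset.range (d + 1), C (r.coeff i / (i + 1)) * Polynomial.bernoulli (i + 1)
  have hQ_eval (x : ℚ) : Q.eval (x + 1) - Q.eval x = r.eval x := by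
    simp only [Q, eval_finsetSum, eval_mul, eval_C, ← Finset.sum_sub_distrib, add_comm x 1,
      bernoulli_eval_one_add, eval_eq_sum_range (p := r)]
    refine Finset.sum_congr rfl fun i _ => ?_
    push_cast
    field_simp
    ring
  have hQ_coeff (j : ℕ) (hj : d + 1 ≤ j) :
      Q.coeff j = if j = d + 1 then r.leadingCoeff / (d + 1) else 0 := by
    simp only [Q, finsetSum_coeff, coeff_C_mul, coeff_bernoulli]
    split_ifs with h
    · subst h
      rw [Finset.sum_eq_single d]
      · simp [← coeff_natDegree, d]
      · intro i hi hid
        have := Finset.mem_range.mp hi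
        simp [show ¬ d + 1 ≤ i + 1 by omega]
      · simp
    · refine Finset.sum_eq_zero fun i hi => ?_
      have := Finset.mem_range.mp hi
      simp [show ¬ j ≤ i + 1 by omega]
  have hlead : Q.coeff (d + 1) ≠ 0 := by
    rw [hQ_coeff _ le_rfl, if_pos rfl]
    exact div_ne_zero (leadingCoeff_ne_zero.mpr hr) (by positivity)
  have hdeg : Q.natDegree = d + 1 :=
    natDegree_eq_of_le_of_coeff_ne_zero
      (natDegree_le_iff_coeff_eq_zero.mpr fun j hj => by rw [hQ_coeff j hj.le, if_neg hj.ne']) hlead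
  refine ⟨Q, hQ_eval, hdeg, ?_⟩
  rw [leadingCoeff, hdeg, hQ_coeff _ le_rfl, if_pos rfl]

lemma exists_eq_eval_of_succ_eq_add_eval (f : ℕ → ℚ) (r : ℚ[X]) (hr : r ≠ 0) (N : ℕ)
    (hf : ∀ n ≥ N, f (n + 1) = f n + r.eval (n : ℚ)) :
    ∃ Q : ℚ[X], Q.natDegree = r.natDegree + 1 ∧
      Q.leadingCoeff = r.leadingCoeff / (r.natDegree + 1) ∧
      ∀ n ≥ N, f n = Q.eval (n : ℚ) := by
  obtain ⟨Q, hQ, hdeg, hlead⟩ := exists_eval_add_one_sub_eval r hr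
  have hcoeff : (Q + C (f N - Q.eval (N : ℚ))).coeff (r.natDegree + 1) = Q.leadingCoeff := by
    rw [coeff_add, coeff_C, if_neg (Nat.succ_ne_zero _), add_zero, leadingCoeff, hdeg]
  refine ⟨Q + C (f N - Q.eval (N : ℚ)), by rw [natDegree_add_C, hdeg], ?_, ?_⟩
  · rw [leadingCoeff, natDegree_add_C, hdeg, hcoeff, hlead]
  · intro n hn
    induction n, hn using Nat.le_induction with
    | base => simp
    | succ n hn ih =>
      rw [hf n hn, ih]
      have := hQ n
      push_cast
      simp only [eval_add, eval_C] at *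
      linarith

lemma exists_polynomial_Chat_sub (m : ℕ) :
    ∃ q : ℚ[X], q.natDegree = m ∧ q.leadingCoeff = 1 / (2 ^ m * m.factorial) ∧
      ∀ n ≥ m, Chat n (n - m) = q.eval (n : ℚ) := by
  induction m with
  | zero => exact ⟨1, by simp, by simp, fun n _ => by simp [Chat_self]⟩
  | succ m ih =>
    obtain ⟨q, hdeg, hlead, hq⟩ := ih
    have hq0 : q ≠ 0 := leadingCoeff_ne_zero.mp (by rw [hlead]; positivity)
    have hf (n : ℕ) (hn : n ≥ m + 1) :
        Chat (n + 1) (n + 1 - (m + 1)) = Chat n (n - (m + 1)) + (C (1 / 2) * q).eval (n : ℚ) := by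
      rw [show n + 1 - (m + 1) = n - (m + 1) + 1 by omega, Chat_succ_succ,
        show n - (m + 1) + 1 = n - m by omega, hq n (by omega), eval_mul, eval_C]
      ring
    obtain ⟨Q, hQdeg, hQlead, hQ⟩ := exists_eq_eval_of_succ_eq_add_eval
      (fun n => Chat n (n - (m + 1))) (C (1 / 2) * q) (mul_ne_zero (by simp) hq0) (m + 1) hf
    refine ⟨Q, ?_, ?_, hQ⟩
    · rw [hQdeg, natDegree_C_mul (by norm_num), hdeg]
    · rw [hQlead, natDegree_C_mul (by norm_num), hdeg, leadingCoeff_mul, leadingCoeff_C, hlead,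
        Nat.factorial_succ]
      push_cast
      field_simp
      ring

lemma natDegree_sub_le_sub_one_of_leadingCoeff_eq {R : Type*} [Ring R] {p q : R[X]} {m : ℕ}
    (hp : p.natDegree = m) (hq : q.natDegree = m) (h : p.leadingCoeff = q.leadingCoeff) :
    (p - q).natDegree ≤ m - 1 := by
  refine natDegree_le_iff_coeff_eq_zero.mpr fun N hN => ?_
  rcases (show m ≤ N by omega).eq_or_lt with rfl | hlt
  · rw [coeff_sub, ← hp, coeff_natDegree, h, leadingCoeff, hq, hp, sub_self]
  · rw [coeff_sub, coeff_eq_zero_of_natDegree_lt (hp ▸ hlt),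
      coeff_eq_zero_of_natDegree_lt (hq ▸ hlt), sub_self]

lemma abs_eval_le_sum_abs_coeff_mul_pow {R : Type*} [CommRing R] [LinearOrder R]
    [IsStrictOrderedRing R] (r : R[X]) {D : ℕ} (hD : r.natDegree ≤ D) {x : R} (hx : 1 ≤ x) :
    |r.eval x| ≤ (∑ i ∈ Finset.range (r.natDegree + 1), |r.coeff i|) * x ^ D := by
  rw [eval_eq_sum_range, Finset.sum_mul]
  refine (Finset.abs_sum_le_sum_abs _ _).trans (Finset.sum_le_sum fun i hi => ?_)
  rw [abs_mul, abs_pow, abs_of_nonneg (zero_le_one.trans hx)]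
  gcongr
  exact (Finset.mem_range_succ_iff.mp hi).trans hD

lemma eval_C_inv_factorial_mul_descPochhammer (m n : ℕ) :
    (C (1 / m.factorial : ℚ) * descPochhammer ℚ m).eval (n : ℚ) = n.choose m := by
  rw [eval_mul, eval_C, descPochhammer_eval_eq_descFactorial,
    Nat.descFactorial_eq_factorial_mul_choose]
  push_cast
  field_simp

theorem stmt_7 (m : ℕ) :
    (∃ q : Polynomial ℚ, q.degree = m ∧
        q.leadingCoeff = 1 / (2 ^ m * m.factorial) ∧
        ∀ n : ℕ, m ≤ n → Chat n (n - m) = q.eval (n : ℚ)) ∧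
    (∃ c : ℚ, ∀ n : ℕ, m ≤ n →
        |Chat n (n - m) - (n.choose m : ℚ) / 2 ^ m| ≤ c * (n : ℚ) ^ (m - 1)) := by
  obtain ⟨q, hdeg, hlead, hq⟩ := exists_polynomial_Chat_sub m
  have hq0 : q ≠ 0 := leadingCoeff_ne_zero.mp (by rw [hlead]; positivity)
  refine ⟨⟨q, by rw [degree_eq_natDegree hq0, hdeg], hlead, hq⟩, ?_⟩
  rcases Nat.eq_zero_or_pos m with rfl | hm
  · exact ⟨0, fun n _ => by simp [Chat_self]⟩
  set p := C (1 / 2 ^ m : ℚ) * (C (1 / m.factorial : ℚ) * descPochhammer ℚ m)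
  have hp : ∀ n : ℕ, p.eval (n : ℚ) = n.choose m / 2 ^ m := fun n => by
    rw [eval_mul, eval_C_inv_factorial_mul_descPochhammer, eval_C, div_mul_eq_mul_div, one_mul]
  have hpdeg : p.natDegree = m := by
    rw [natDegree_C_mul (by simp), natDegree_C_mul (by simp [Nat.factorial_ne_zero]),
      descPochhammer_natDegree]
  have hplead : p.leadingCoeff = q.leadingCoeff := by
    simp [p, leadingCoeff_mul, (monic_descPochhammer ℚ m).leadingCoeff, hlead, mul_comm]
  refine ⟨∑ i ∈ Finset.range ((q - p).natDegree + 1), |(q - p).coeff i|, fun n hn => ?_⟩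
  rw [hq n hn, ← hp, ← eval_sub]
  exact abs_eval_le_sum_abs_coeff_mul_pow _
    (natDegree_sub_le_sub_one_of_leadingCoeff_eq hdeg hpdeg hplead.symm)
    (by exact_mod_cast hm.trans_le hn)
end

section
/- Let D(n) denote the expected total number of distinct subsequences (including the empty subsequence) of a uniformly random binary string of length n. Then D(0) = 1 and, for n ≥ 1, D(n) = 1 + D(n−1) + Σ_{k=1}^{n-1} 2^{-k} D(n−k−1), where the k = n−1 term has probability 2^{1-n}. -/
/-- Total number of distinct subsequences of `s` (including the empty subsequence). -/
def countAll (s : List Bool) : ℕ := (s.sublists.dedup).length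

open List

def afterB (b : Bool) : List Bool → List Bool
  | [] => []
  | c :: s => if c = b then s else afterB b s

theorem cons_sublist_afterB (b : Bool) (s : List Bool) (hb : b ∈ s) (u : List Bool) :
    b :: u <+ s ↔ u <+ afterB b s := by
  induction s with
  | nil => simp at hb
  | cons c t ih =>
    by_cases h : c = b
    · subst h
      simp only [afterB, if_pos rfl]
      exact List.cons_sublist_cons
    · have hb' : b ∈ t := by
        rcases List.mem_cons.mp hb with h1 | h1
        · exact absurd h1.symm h
        · exact h1
      simp only [afterB, if_neg h]
      rw [← ih hb']
      constructor
      · intro hsub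
        rcases List.cons_sublist_cons'.mp hsub with h1 | ⟨h1, _⟩
        · exact h1
        · exact absurd h1.symm h
      · intro hsub; exact hsub.cons _

theorem countAll_eq (s : List Bool) : countAll s = s.sublists.toFinset.card := by
  rw [countAll, List.card_toFinset]

noncomputable def psi (b : Bool) (s : List Bool) : ℕ :=
  if b ∈ s then countAll (afterB b s) else 0

theorem countAll_cons (b : Bool) (s : List Bool) :
    countAll (b :: s) + psi b s = 2 * countAll s := by
  classical
  have hT : ∀ t : List Bool, ∀ u, u ∈ t.sublists.toFinset ↔ u <+ t := by
    intro t u; simp [List.mem_sublists]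
  have hunion : (b :: s).sublists.toFinset
      = s.sublists.toFinset ∪ s.sublists.toFinset.image (b :: ·) := by
    ext t
    simp only [Finset.mem_union, Finset.mem_image, hT]
    constructor
    · intro h
      rcases List.sublist_cons_iff.mp h with h1 | ⟨r, hr, hrs⟩
      · exact Or.inl h1
      · exact Or.inr ⟨r, hrs, hr.symm⟩
    · rintro (h | ⟨u, hu, rfl⟩)
      · exact h.cons _
      · exact List.cons_sublist_cons.mpr hu
  have hinj : Function.Injective (fun u : List Bool => b :: u) := by
    intro x y hxy; simpa using hxy
  have himg : (s.sublists.toFinset.image (b :: ·)).card = countAll s := by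
    rw [Finset.card_image_of_injective _ hinj, countAll_eq]
  have hcard := Finset.card_union_add_card_inter s.sublists.toFinset
      (s.sublists.toFinset.image (b :: ·))
  by_cases hb : b ∈ s
  · have hinter : s.sublists.toFinset ∩ s.sublists.toFinset.image (b :: ·)
        = (afterB b s).sublists.toFinset.image (b :: ·) := by
      ext t
      simp only [Finset.mem_inter, Finset.mem_image, hT]
      constructor
      · rintro ⟨h1, u, hu, rfl⟩
        exact ⟨u, (cons_sublist_afterB b s hb u).mp h1, rfl⟩
      · rintro ⟨u, hu, rfl⟩
        have h1 := (cons_sublist_afterB b s hb u).mpr hu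
        exact ⟨h1, u, (List.sublist_cons_self b u).trans h1, rfl⟩
    have hic : (s.sublists.toFinset ∩ s.sublists.toFinset.image (b :: ·)).card
        = countAll (afterB b s) := by
      rw [hinter, Finset.card_image_of_injective _ hinj, countAll_eq]
    rw [psi, if_pos hb, countAll_eq (b :: s), hunion, ← hic, hcard, himg,
      countAll_eq s, two_mul]
  · have hinter : s.sublists.toFinset ∩ s.sublists.toFinset.image (b :: ·) = ∅ := by
      ext t
      simp only [Finset.mem_inter, Finset.mem_image, hT, Finset.notMem_empty, iff_false]
      rintro ⟨h1, u, hu, rfl⟩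
      exact hb (h1.subset (List.mem_cons_self (a := b) (l := u)))
    rw [psi, if_neg hb, Nat.add_zero, countAll_eq, hunion]
    have := hcard
    rw [hinter, Finset.card_empty, Nat.add_zero] at this
    rw [this, himg, countAll_eq, two_mul]

theorem psi_cons_same (b : Bool) (s : List Bool) : psi b (b :: s) = countAll s := by
  rw [psi, if_pos (List.mem_cons_self (a := b) (l := s))]
  simp [afterB]

theorem psi_cons_ne (b c : Bool) (s : List Bool) (h : c ≠ b) :
    psi b (c :: s) = psi b s := by
  have hmem : (b ∈ c :: s) ↔ (b ∈ s) := by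
    rw [List.mem_cons]
    constructor
    · rintro (heq | hm)
      · exact (h heq.symm).elim
      · exact hm
    · exact Or.inr
  rw [psi, psi]
  simp only [afterB, if_neg h, hmem]

noncomputable def Aseq (n : ℕ) : ℕ := ∑ f : Fin n → Bool, countAll (List.ofFn f)

noncomputable def Phi (b : Bool) (n : ℕ) : ℕ := ∑ f : Fin n → Bool, psi b (List.ofFn f)

theorem sum_succ_split (n : ℕ) (F : List Bool → ℕ) :
    ∑ f : Fin (n + 1) → Bool, F (List.ofFn f)
      = ∑ g : Fin n → Bool, (F (true :: List.ofFn g) + F (false :: List.ofFn g)) := by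
  rw [← (Fin.consEquiv fun _ : Fin (n + 1) => Bool).sum_comp (fun f => F (List.ofFn f))]
  rw [Fintype.sum_prod_type]
  rw [Fintype.sum_bool]
  rw [← Finset.sum_add_distrib]
  apply Finset.sum_congr rfl
  intro g _
  have h : ∀ b : Bool, List.ofFn ((Fin.consEquiv fun _ : Fin (n + 1) => Bool) (b, g)) = b :: List.ofFn g := by
    intro b
    rw [List.ofFn_succ]
    simp [Fin.consEquiv]
  rw [h true, h false]

theorem Aseq_zero : Aseq 0 = 1 := by decide

theorem Phi_zero (b : Bool) : Phi b 0 = 0 := by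
  cases b <;> decide

theorem Phi_succ (b : Bool) (n : ℕ) : Phi b (n + 1) = Aseq n + Phi b n := by
  rw [Phi, sum_succ_split n (psi b), Aseq, Phi, ← Finset.sum_add_distrib]
  apply Finset.sum_congr rfl
  intro g _
  cases b
  · rw [psi_cons_same, psi_cons_ne false true _ (by decide), Nat.add_comm]
  · rw [psi_cons_same, psi_cons_ne true false _ (by decide)]

theorem Aseq_succ (n : ℕ) :
    Aseq (n + 1) + Phi true n + Phi false n = 4 * Aseq n := by
  rw [Aseq, sum_succ_split n countAll, Phi, Phi]
  rw [← Finset.sum_add_distrib, ← Finset.sum_add_distrib]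
  have : ∀ g : Fin n → Bool,
      countAll (true :: List.ofFn g) + countAll (false :: List.ofFn g)
        + psi true (List.ofFn g) + psi false (List.ofFn g)
      = 4 * countAll (List.ofFn g) := by
    intro g
    have h1 := countAll_cons true (List.ofFn g)
    have h2 := countAll_cons false (List.ofFn g)
    omega
  rw [Finset.sum_congr rfl (fun g _ => this g), ← Finset.mul_sum, Aseq]

theorem Phi_eq_sum (b : Bool) (n : ℕ) : Phi b n = ∑ j ∈ Finset.range n, Aseq j := by
  induction n with
  | zero => rw [Phi_zero]; simp
  | succ n ih => rw [Phi_succ, ih, Finset.sum_range_succ, Nat.add_comm]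

theorem Aseq_key : ∀ n : ℕ, 1 ≤ n → Aseq n = 2 ^ n + 2 * ∑ j ∈ Finset.range n, Aseq j := by
  intro n hn
  induction n with
  | zero => omega
  | succ n ih =>
    rcases Nat.eq_or_lt_of_le hn with h | h
    · have : n = 0 := by omega
      subst this
      decide
    · have hn' : 1 ≤ n := by omega
      have ihn := ih hn'
      have hstep := Aseq_succ n
      rw [Phi_eq_sum, Phi_eq_sum] at hstep
      rw [Finset.sum_range_succ]
      have : Aseq (n + 1) + 2 * ∑ j ∈ Finset.range n, Aseq j = 4 * Aseq n := by omega
      rw [pow_succ]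
      omega

/-- Expected total number of distinct subsequences of a uniformly random
binary string of length `n`. -/
noncomputable def D (n : ℕ) : ℚ :=
  (∑ f : Fin n → Bool, (countAll (List.ofFn f) : ℚ)) / 2 ^ n

theorem D_eq (n : ℕ) : D n = (Aseq n : ℚ) / 2 ^ n := by
  rw [D, Aseq, Nat.cast_sum]

theorem stmt_9 :
    D 0 = 1 ∧
    ∀ n : ℕ, 1 ≤ n →
      D n = 1 + ∑ k ∈ Finset.range n, (1 / 2 : ℚ) ^ k * D (n - k - 1) := by
  constructor
  · rw [D_eq, Aseq_zero]; norm_num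
  · intro n hn
    have hA : (Aseq n : ℚ) = 2 ^ n + 2 * ∑ j ∈ Finset.range n, (Aseq j : ℚ) := by
      have := Aseq_key n hn
      push_cast [this]
      ring
    have hterm : ∀ k ∈ Finset.range n,
        (1 / 2 : ℚ) ^ k * D (n - k - 1) = (Aseq (n - k - 1) : ℚ) / 2 ^ (n - 1) := by
      intro k hk
      rw [Finset.mem_range] at hk
      rw [D_eq, div_pow, one_pow]
      rw [div_mul_div_comm, one_mul, ← pow_add]
      congr 2
      omega
    rw [Finset.sum_congr rfl hterm, ← Finset.sum_div]
    have hrefl : ∑ k ∈ Finset.range n, (Aseq (n - k - 1) : ℚ)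
        = ∑ j ∈ Finset.range n, (Aseq j : ℚ) := by
      rw [← Finset.sum_range_reflect (fun j => (Aseq j : ℚ)) n]
      apply Finset.sum_congr rfl
      intro k hk
      rw [Finset.mem_range] at hk
      congr 2
      omega
    rw [hrefl, D_eq, hA]
    have h2 : (2 : ℚ) ^ n = 2 * 2 ^ (n - 1) := by
      rw [← pow_succ']
      congr 1
      omega
    rw [h2]
    have hne : (2 : ℚ) ^ (n - 1) ≠ 0 := by positivity
    field_simp
end

section
/- Let D(n) be the expected total number of distinct subsequences (including the empty one) of a uniformly random binary string of length n. Then D(n) = 1/2 + (3/2)·D(n−1) for all n ≥ 1. -/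
open Finset

namespace List

variable {α : Type*} [DecidableEq α]

theorem toFinset_sublists_cons (a : α) (t : List α) :
    (a :: t).sublists.toFinset = t.sublists.toFinset ∪ t.sublists.toFinset.image (a :: ·) := by
  rw [toFinset_eq_of_perm _ _ (sublists_cons_perm_append a t), toFinset_append]
  ext
  simp

theorem toFinset_sublists_inter_image_cons (a : α) (t : List α) :
    t.sublists.toFinset ∩ t.sublists.toFinset.image (a :: ·)
      = {u ∈ t.sublists.toFinset | u.head? = some a} := by
  ext u
  simp only [Finset.mem_inter, Finset.mem_image, Finset.mem_filter, mem_toFinset, mem_sublists]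
  constructor
  · rintro ⟨hu, v, -, rfl⟩
    exact ⟨hu, rfl⟩
  · rintro ⟨hu, hhead⟩
    obtain ⟨v, rfl⟩ : ∃ v, u = a :: v := by
      cases u <;> simp_all
    exact ⟨hu, v, (sublist_cons_self a v).trans hu, rfl⟩

theorem card_toFinset_sublists_cons_add_card_filter (a : α) (t : List α) :
    #(a :: t).sublists.toFinset + #{u ∈ t.sublists.toFinset | u.head? = some a}
      = 2 * #t.sublists.toFinset := by
  rw [toFinset_sublists_cons, ← toFinset_sublists_inter_image_cons, card_union_add_card_inter,
    card_image_of_injective _ (cons_injective (a := a))]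
  ring

theorem sum_card_filter_head?_add_one [Fintype α] (t : List α) :
    ∑ a, #{u ∈ t.sublists.toFinset | u.head? = some a} + 1 = #t.sublists.toFinset := by
  have hnone : {u ∈ t.sublists.toFinset | u.head? = none} = {[]} := by
    ext u
    cases u <;> simp
  rw [card_eq_sum_card_fiberwise (f := head?) (t := univ) (by simp), Fintype.sum_option, hnone,
    card_singleton, add_comm]

theorem sum_card_toFinset_sublists_cons [Fintype α] (t : List α) :
    ∑ a, #(a :: t).sublists.toFinset + #t.sublists.toFinset
      = 2 * Fintype.card α * #t.sublists.toFinset + 1 := by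
  have hcons := sum_congr rfl fun a (_ : a ∈ univ) =>
    card_toFinset_sublists_cons_add_card_filter a t
  rw [sum_add_distrib, sum_const, card_univ, smul_eq_mul] at hcons
  have hhead := sum_card_filter_head?_add_one t
  linarith

end List

theorem Fintype.sum_ofFn_succ {α M : Type*} [Fintype α] [AddCommMonoid M] (F : List α → M)
    (m : ℕ) :
    ∑ f : Fin (m + 1) → α, F (List.ofFn f) = ∑ g : Fin m → α, ∑ a, F (a :: List.ofFn g) := by
  rw [← (Fin.consEquiv fun _ => α).sum_comp, Fintype.sum_prod_type, sum_comm]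
  simp [List.ofFn_succ]

theorem countAll_eq_card (t : List Bool) : countAll t = #t.sublists.toFinset :=
  (List.card_toFinset _).symm

theorem countAll_false_cons_add_countAll_true_cons (t : List Bool) :
    countAll (false :: t) + countAll (true :: t) = 3 * countAll t + 1 := by
  have := List.sum_card_toFinset_sublists_cons t
  simp only [Fintype.sum_bool, Fintype.card_bool] at this
  simp only [countAll_eq_card]
  omega

theorem sum_countAll_ofFn_succ (m : ℕ) :
    ∑ f : Fin (m + 1) → Bool, (countAll (List.ofFn f) : ℚ)
      = 3 * ∑ g : Fin m → Bool, (countAll (List.ofFn g) : ℚ) + 2 ^ m := by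
  have hcast (g : Fin m → Bool) := congrArg (Nat.cast (R := ℚ))
    (countAll_false_cons_add_countAll_true_cons (List.ofFn g))
  push_cast at hcast
  rw [Fintype.sum_ofFn_succ fun l => (countAll l : ℚ)]
  simp_rw [Fintype.sum_bool, add_comm (countAll (true :: _) : ℚ), hcast, sum_add_distrib, mul_sum]
  simp

theorem stmt_10 (n : ℕ) (hn : 1 ≤ n) :
    D n = 1 / 2 + (3 / 2) * D (n - 1) := by
  obtain ⟨m, rfl⟩ := Nat.exists_eq_add_of_le' hn
  rw [Nat.add_sub_cancel, D, D, sum_countAll_ofFn_succ]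
  field_simp
  ring
end
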